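/- Given L ≥ 1, real parameters J_u > 0, η > 0, A > 0, 0 < α < 1, ordered nodes 0 < θ_1 < θ_2 < … < θ_L and positive weights μ_1, …, μ_L > 0, set γ_ℓ = (2 sin(πα)/(π J_u)) θ_ℓ^{1−2α} and Υ_ℓ = A Γ(1+α) γ_ℓ, and let S be the (L+2)×(L+2) real matrix whose row 0 and column 0 are zero and whose remaining entries are S(1,1) = −1/(J_u η), S(1,1+ℓ) = −A Γ(1+α) μ_ℓ / J_u, S(1+ℓ,1) = −γ_ℓ/η, and S(1+ℓ,1+j) = −Υ_ℓ μ_j − θ_ℓ² δ_{ℓj}. Then 0 is an eigenvalue of S of algebraic multiplicity exactly 1, and there exist L+1 real numbers λ_1, …, λ_{L+1}, each an eigenvalue of S, satisfying λ_{L+1} < −θ_L², −θ_ℓ² < λ_ℓ < −θ_{ℓ−1}² for ℓ = 2, …, L, and −θ_1² < λ_1 < 0. In particular all L+2 eigenvalues of S are real, simple, and the nonzero ones are strictly negative. -/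

import Mathlib

/-!
Deleting the zero first row and column of `S` splits off the eigenvalue `0`; the remaining block
is `-(diag d + u vᵀ)` with `d = (0, θ₁², …, θ_L²)`, `u = (1/J_u, γ)` and `v = (1/η, A Γ(1+α) μ)`.
By the matrix determinant lemma its characteristic polynomial is, away from the poles `-d_k`, the
secular function `∏ₖ (x + d_k) + ∑ᵢ uᵢvᵢ ∏_{k≠i} (x + d_k)`. Since every `uᵢvᵢ > 0`, this function
alternates in sign at the poles and has the sign of `(-1)^(L+1)` far to the left, so it vanishes
strictly between consecutive poles and once to the left of the last one. With `0` these are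
`L + 2` distinct roots of a polynomial of degree `L + 2`, hence all of its roots.
-/

open Finset Matrix Polynomial

theorem exists_mem_Ioo_eq_zero_of_mul_neg {f : ℝ → ℝ} (hf : Continuous f) {a b : ℝ}
    (hab : a < b) (h : f a * f b < 0) : ∃ c ∈ Set.Ioo a b, f c = 0 := by
  rcases mul_neg_iff.1 h with ⟨ha, hb⟩ | ⟨ha, hb⟩
  · exact intermediate_value_Ioo' hab.le hf.continuousOn ⟨hb, ha⟩
  · exact intermediate_value_Ioo hab.le hf.continuousOn ⟨ha, hb⟩

theorem mul_neg_of_neg_one_pow_mul_pos {a b : ℝ} {k : ℕ} (ha : 0 < (-1) ^ (k + 1) * a)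
    (hb : 0 < (-1) ^ k * b) : a * b < 0 := by
  rcases neg_one_pow_eq_or ℝ k with h | h <;> simp only [pow_succ, h] at ha hb <;> nlinarith

theorem sum_mul_prod_erase_lt_prod {ι : Type*} [Fintype ι] [DecidableEq ι] {w c : ι → ℝ}
    (hw : ∀ i, 0 ≤ w i) (hc : ∀ k, 1 + ∑ i, w i ≤ c k) :
    ∑ i, w i * ∏ k ∈ univ.erase i, c k < ∏ k, c k := by
  set B := 1 + ∑ i, w i
  have hB : 0 < B := by have := sum_nonneg fun i (_ : i ∈ univ) => hw i; linarith
  have hP : 0 < ∏ k, c k := prod_pos fun k _ => hB.trans_le (hc k)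
  have hterm : ∀ i, w i * (∏ k ∈ univ.erase i, c k) * B ≤ w i * ∏ k, c k := fun i => by
    have hwP : 0 ≤ w i * ∏ k ∈ univ.erase i, c k :=
      mul_nonneg (hw i) (prod_nonneg fun k _ => (hB.trans_le (hc k)).le)
    rw [← mul_prod_erase univ c (mem_univ i)]
    linarith [mul_le_mul_of_nonneg_left (hc i) hwP]
  have hmul : (∑ i, w i * ∏ k ∈ univ.erase i, c k) * B < (∏ k, c k) * B := calc
    _ ≤ (∑ i, w i) * ∏ k, c k := by simpa only [sum_mul] using sum_le_sum fun i _ => hterm i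
    _ < B * ∏ k, c k := mul_lt_mul_of_pos_right (lt_add_of_pos_left _ one_pos) hP
    _ = (∏ k, c k) * B := mul_comm _ _
  exact lt_of_mul_lt_mul_right hmul hB.le

/-- The numerator of `1 + ∑ i, w i / (x + d i)`. -/
def secular {K ι : Type*} [CommRing K] [Fintype ι] [DecidableEq ι] (d w : ι → K) (x : K) : K :=
  ∏ k, (x + d k) + ∑ i, w i * ∏ k ∈ univ.erase i, (x + d k)

section Determinant

variable {K : Type*} [Field K] {m : Type*} [Fintype m] [DecidableEq m] {ι : Type*} [Unique ι]

theorem Matrix.det_diagonal_add_replicateCol_mul_replicateRow (e u v : m → K) (he : ∀ i, e i ≠ 0) :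
    (diagonal e + replicateCol ι u * replicateRow ι v).det
      = ∏ i, e i + ∑ i, u i * v i * ∏ k ∈ univ.erase i, e k := by
  have hfactor : diagonal e + replicateCol ι u * replicateRow ι v
      = diagonal e * (1 + replicateCol ι (fun i => u i / e i) * replicateRow ι v) := by
    ext i j
    rw [diagonal_mul]
    by_cases hij : i = j <;>
      simp [hij, mul_apply, mul_add, ← mul_assoc, mul_div_cancel₀, he]
  rw [hfactor, det_mul, det_diagonal, det_one_add_replicateCol_mul_replicateRow, dotProduct,
    mul_add, mul_one, mul_sum]
  congr 1
  refine sum_congr rfl fun i _ => ?_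
  rw [← mul_prod_erase univ e (mem_univ i)]
  field_simp [he i]

theorem Matrix.charpoly_eq_X_mul_charpoly_submatrix_succ {R : Type*} [CommRing R] {n : ℕ}
    (M : Matrix (Fin (n + 1)) (Fin (n + 1)) R) (hM : ∀ j, M 0 j = 0) :
    M.charpoly = X * (M.submatrix Fin.succ Fin.succ).charpoly := by
  rw [charpoly, det_succ_row_zero, sum_eq_single 0]
  · simp only [charmatrix_apply, hM, Fin.succAbove_zero, charpoly, map_zero, sub_zero,
      diagonal_apply_eq]
    congr 2
    · simp
    · refine Matrix.ext fun i j => ?_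
      by_cases hij : i = j <;> simp [hij]
  · intro j _ hj
    simp [charmatrix_apply_ne _ _ _ (Ne.symm hj), hM]
  · simp

theorem Matrix.eval_charpoly_neg_diagonal_add_replicateCol_mul_replicateRow (d u v : m → K) (x : K)
    (hx : ∀ i, x + d i ≠ 0) :
    (-(diagonal d + replicateCol ι u * replicateRow ι v)).charpoly.eval x
      = secular d (u * v) x := by
  rw [eval_charpoly, scalar_apply, sub_neg_eq_add, ← add_assoc, diagonal_add,
    det_diagonal_add_replicateCol_mul_replicateRow _ u v hx]
  rfl

end Determinant

section Secular

variable {n : ℕ} {ι : Type*} [Fintype ι] [DecidableEq ι]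

theorem continuous_secular (d w : ι → ℝ) : Continuous (secular d w) := by
  unfold secular
  fun_prop

theorem secular_neg {K : Type*} [CommRing K] (d w : ι → K) (i : ι) :
    secular d w (-d i) = w i * ∏ k ∈ univ.erase i, (d k - d i) := by
  rw [secular, prod_eq_zero (mem_univ i) (neg_add_cancel _), zero_add,
    sum_eq_single i (fun j _ hji => ?_) (by simp)]
  · simp only [neg_add_eq_sub]
  · rw [prod_eq_zero (mem_erase.2 ⟨Ne.symm hji, mem_univ i⟩) (neg_add_cancel _), mul_zero]

theorem neg_one_pow_mul_prod_erase_sub_pos {d : Fin n → ℝ} (hd : StrictMono d) (i : Fin n) :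
    0 < (-1) ^ (i : ℕ) * ∏ k ∈ univ.erase i, (d k - d i) := by
  have hsplit : univ.erase i = Iio i ∪ Ioi i := by ext k; simp
  rw [hsplit, prod_union (disjoint_left.2 fun k h₁ h₂ => lt_asymm (mem_Iio.1 h₁) (mem_Ioi.1 h₂)),
    ← mul_assoc, ← Fin.card_Iio i, ← prod_neg]
  exact mul_pos (prod_pos fun k hk => neg_pos.2 (sub_neg.2 (hd (mem_Iio.1 hk))))
    (prod_pos fun k hk => sub_pos.2 (hd (mem_Ioi.1 hk)))

theorem neg_one_pow_mul_secular_pos {d w : Fin (n + 1) → ℝ} (hw : ∀ i, 0 ≤ w i) {x : ℝ}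
    (hx : ∀ k, x + d k ≤ -(1 + ∑ i, w i)) : 0 < (-1) ^ (n + 1) * secular d w x := by
  set c : Fin (n + 1) → ℝ := fun k => -(x + d k)
  set s : ℝ := (-1) ^ n
  have hs : s * s = 1 := by rw [← pow_add, ← two_mul, pow_mul, neg_one_sq, one_pow]
  have hxc : ∀ k, x + d k = -c k := fun k => (neg_neg _).symm
  have hprod : ∏ k, (x + d k) = -s * ∏ k, c k := by
    simp only [hxc, prod_neg, card_univ, Fintype.card_fin, pow_succ, s]; ring
  have hprod_erase : ∀ i, ∏ k ∈ univ.erase i, (x + d k) = s * ∏ k ∈ univ.erase i, c k := by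
    intro i
    simp only [hxc, prod_neg, card_erase_of_mem (mem_univ i), card_univ, Fintype.card_fin,
      Nat.add_sub_cancel, s]
  have hexpand :
      (-1) ^ (n + 1) * secular d w x = ∏ k, c k - ∑ i, w i * ∏ k ∈ univ.erase i, c k := by
    simp only [secular, hprod, hprod_erase, mul_left_comm _ s, ← mul_sum]
    linear_combination (∏ k, c k - ∑ i, w i * ∏ k ∈ univ.erase i, c k) * hs
  rw [hexpand, sub_pos]
  exact sum_mul_prod_erase_lt_prod hw fun k => le_neg_of_le_neg (hx k)

theorem exists_secular_roots_interlacing {d w : Fin (n + 1) → ℝ} (hd : StrictMono d)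
    (hw : ∀ i, 0 < w i) :
    ∃ lam : Fin (n + 1) → ℝ, (∀ i, secular d w (lam i) = 0) ∧ (∀ i, lam i < -d i) ∧
      ∀ i : Fin n, -d i.succ < lam i.castSucc := by
  have hpole : ∀ i : Fin (n + 1), 0 < (-1) ^ (i : ℕ) * secular d w (-d i) := fun i => by
    rw [secular_neg, mul_left_comm]
    exact mul_pos (hw i) (neg_one_pow_mul_prod_erase_sub_pos hd i)
  have hinner : ∀ i : Fin n, ∃ x ∈ Set.Ioo (-d i.succ) (-d i.castSucc), secular d w x = 0 :=
    fun i => exists_mem_Ioo_eq_zero_of_mul_neg (continuous_secular d w)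
      (neg_lt_neg (hd Fin.castSucc_lt_succ))
      (mul_neg_of_neg_one_pow_mul_pos (hpole i.succ) (hpole i.castSucc))
  set x₀ := -(d (Fin.last n) + (1 + ∑ i, w i))
  have hfar : ∀ k, x₀ + d k ≤ -(1 + ∑ i, w i) := fun k => by
    have := hd.monotone (Fin.le_last k)
    simp only [x₀]
    linarith
  have hlast : ∃ x ∈ Set.Ioo x₀ (-d (Fin.last n)), secular d w x = 0 := by
    have hpos : 0 < 1 + ∑ i, w i := by
      have := sum_nonneg fun i (_ : i ∈ univ) => (hw i).le
      linarith
    refine exists_mem_Ioo_eq_zero_of_mul_neg (continuous_secular d w) (by linarith)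
      (mul_neg_of_neg_one_pow_mul_pos (neg_one_pow_mul_secular_pos (fun i => (hw i).le) hfar) ?_)
    simpa using hpole (Fin.last n)
  choose inner hinner_mem hinner_root using hinner
  obtain ⟨last, hlast_mem, hlast_root⟩ := hlast
  refine ⟨Fin.snoc inner last, fun i => ?_, fun i => ?_, fun i => ?_⟩
  · induction i using Fin.lastCases <;> simp [hinner_root, hlast_root]
  · induction i using Fin.lastCases <;> simp [(hinner_mem _).2, hlast_mem.2]
  · simpa using (hinner_mem i).1

theorem strictAnti_of_interlacing {d lam : Fin (n + 1) → ℝ} (hlt : ∀ i, lam i < -d i)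
    (hgt : ∀ i : Fin n, -d i.succ < lam i.castSucc) : StrictAnti lam :=
  Fin.strictAnti_iff_succ_lt.2 fun i => (hlt i.succ).trans (hgt i)

theorem add_ne_zero_of_interlacing {d lam : Fin (n + 1) → ℝ} (hd : Monotone d)
    (hlt : ∀ i, lam i < -d i) (hgt : ∀ i : Fin n, -d i.succ < lam i.castSucc) (i k : Fin (n + 1)) :
    lam i + d k ≠ 0 := by
  rcases le_or_gt k i with hki | hik
  · have := hd hki
    have := hlt i
    linarith
  · obtain ⟨j, rfl⟩ : ∃ j : Fin n, j.castSucc = i :=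
      ⟨_, Fin.castSucc_castPred i (Fin.ne_last_of_lt hik)⟩
    have := hd (Fin.castSucc_lt_iff_succ_le.1 hik)
    have := hgt j
    linarith

end Secular

section Spectrum

variable {n : ℕ} {M : Matrix (Fin (n + 2)) (Fin (n + 2)) ℝ} {d u v : Fin (n + 1) → ℝ}

theorem charpoly_roots_eq_zero_cons_map (hrow : ∀ j, M 0 j = 0)
    (hM : M.submatrix Fin.succ Fin.succ
      = -(diagonal d + replicateCol (Fin 1) u * replicateRow (Fin 1) v))
    (hd : Monotone d) {lam : Fin (n + 1) → ℝ} (hroot : ∀ i, secular d (u * v) (lam i) = 0)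
    (hlt : ∀ i, lam i < -d i) (hgt : ∀ i : Fin n, -d i.succ < lam i.castSucc)
    (hneg : ∀ i, lam i < 0) :
    M.charpoly.roots = 0 ::ₘ univ.val.map lam := by
  have hfactor := charpoly_eq_X_mul_charpoly_submatrix_succ M hrow
  let Z : Finset ℝ := Finset.cons 0 (univ.map ⟨lam, (strictAnti_of_interlacing hlt hgt).injective⟩)
    (by simpa using fun i => (hneg i).ne)
  refine roots_eq_of_natDegree_le_card_of_ne_zero (S := Z) (fun x hx => ?_) ?_
    (charpoly_monic M).ne_zero
  · rw [Finset.mem_cons, Finset.mem_map] at hx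
    rcases hx with rfl | ⟨i, -, rfl⟩
    · rw [hfactor, eval_mul, eval_X, zero_mul]
    · rw [hfactor, eval_mul, hM]
      exact mul_eq_zero_of_right _ ((eval_charpoly_neg_diagonal_add_replicateCol_mul_replicateRow
        d u v _ (add_ne_zero_of_interlacing hd hlt hgt i)).trans (hroot i))
  · simp only [Z, charpoly_natDegree_eq_dim, card_cons, card_map, card_univ, Fintype.card_fin,
      le_refl]

theorem exists_interlacing_charpoly_roots (hrow : ∀ j, M 0 j = 0)
    (hM : M.submatrix Fin.succ Fin.succ
      = -(diagonal d + replicateCol (Fin 1) u * replicateRow (Fin 1) v))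
    (hd : StrictMono d) (hd0 : 0 ≤ d 0) (huv : ∀ i, 0 < u i * v i) :
    ∃ lam : Fin (n + 1) → ℝ, (∀ i, M.charpoly.IsRoot (lam i)) ∧ (∀ i, lam i < -d i) ∧
      (∀ i : Fin n, -d i.succ < lam i.castSucc) ∧
      M.charpoly.rootMultiplicity 0 = 1 ∧ M.charpoly.roots.card = n + 2 ∧
      M.charpoly.roots.Nodup ∧ ∀ x ∈ M.charpoly.roots, x ≠ 0 → x < 0 := by
  obtain ⟨lam, hroot, hlt, hgt⟩ := exists_secular_roots_interlacing hd huv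
  have hneg : ∀ i, lam i < 0 := fun i =>
    (hlt i).trans_le (neg_nonpos.2 (hd0.trans (hd.monotone i.zero_le)))
  have hroots := charpoly_roots_eq_zero_cons_map hrow hM hd.monotone hroot hlt hgt hneg
  have hnodup : (0 ::ₘ univ.val.map lam).Nodup := Multiset.nodup_cons.2
    ⟨fun h => by obtain ⟨i, -, hi⟩ := Multiset.mem_map.1 h; exact (hneg i).ne hi,
      univ.nodup.map (strictAnti_of_interlacing hlt hgt).injective⟩
  refine ⟨lam, fun i => ?_, hlt, hgt, ?_, by simp [hroots], hroots ▸ hnodup, fun x hx hx0 => ?_⟩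
  · exact isRoot_of_mem_roots
      (hroots ▸ Multiset.mem_cons_of_mem (Multiset.mem_map_of_mem _ (mem_univ_val i)))
  · rw [← count_roots, hroots]
    exact Multiset.count_eq_one_of_mem hnodup (Multiset.mem_cons_self _ _)
  · rw [hroots, Multiset.mem_cons, Multiset.mem_map] at hx
    obtain rfl | ⟨i, -, rfl⟩ := hx
    · exact absurd rfl hx0
    · exact hneg i

end Spectrum

theorem stmt_3 (L : ℕ) (hL : 1 ≤ L) (Ju η A α : ℝ) (hJ : 0 < Ju) (hη : 0 < η) (hA : 0 < A)
    (hα0 : 0 < α) (hα1 : α < 1)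
    (θ μ γ Υ : Fin L → ℝ) (hθ : ∀ ℓ, 0 < θ ℓ) (hmono : StrictMono θ) (hμ : ∀ ℓ, 0 < μ ℓ)
    (hγ : ∀ ℓ, γ ℓ = (2 * Real.sin (Real.pi * α) / (Real.pi * Ju)) * θ ℓ ^ (1 - 2 * α))
    (hΥ : ∀ ℓ, Υ ℓ = A * Real.Gamma (1 + α) * γ ℓ)
    (S : Matrix (Fin (L + 2)) (Fin (L + 2)) ℝ)
    (hS : ∀ i j : Fin (L + 2), S i j =
      if (i : ℕ) = 0 ∨ (j : ℕ) = 0 then 0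
      else if (i : ℕ) = 1 ∧ (j : ℕ) = 1 then -1 / (Ju * η)
      else if h : (i : ℕ) = 1 ∧ 2 ≤ (j : ℕ) then
        -A * Real.Gamma (1 + α) * μ ⟨(j : ℕ) - 2, by have := j.isLt; omega⟩ / Ju
      else if h : 2 ≤ (i : ℕ) ∧ (j : ℕ) = 1 then
        -γ ⟨(i : ℕ) - 2, by have := i.isLt; omega⟩ / η
      else if h : 2 ≤ (i : ℕ) ∧ 2 ≤ (j : ℕ) then
        -Υ ⟨(i : ℕ) - 2, by have := i.isLt; omega⟩ * μ ⟨(j : ℕ) - 2, by have := j.isLt; omega⟩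
          - (θ ⟨(i : ℕ) - 2, by have := i.isLt; omega⟩) ^ 2 * (if i = j then 1 else 0)
      else 0) :
    S.charpoly.rootMultiplicity 0 = 1 ∧
    (∃ lam : Fin (L + 1) → ℝ,
      (∀ i, S.charpoly.IsRoot (lam i)) ∧
      lam ⟨L, by omega⟩ < -(θ ⟨L - 1, by omega⟩) ^ 2 ∧
      (∀ m : Fin L, 1 ≤ (m : ℕ) →
        -(θ m) ^ 2 < lam ⟨(m : ℕ), by have := m.isLt; omega⟩ ∧
        lam ⟨(m : ℕ), by have := m.isLt; omega⟩
          < -(θ ⟨(m : ℕ) - 1, by have := m.isLt; omega⟩) ^ 2) ∧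
      -(θ ⟨0, by omega⟩) ^ 2 < lam ⟨0, by omega⟩ ∧ lam ⟨0, by omega⟩ < 0) ∧
    S.charpoly.roots.card = L + 2 ∧ S.charpoly.roots.Nodup ∧
    (∀ x ∈ S.charpoly.roots, x ≠ 0 → x < 0) := by
  set d : Fin (L + 1) → ℝ := Fin.cons 0 fun ℓ => θ ℓ ^ 2
  set u : Fin (L + 1) → ℝ := Fin.cons (1 / Ju) γ
  set v : Fin (L + 1) → ℝ := Fin.cons (1 / η) fun ℓ => A * Real.Gamma (1 + α) * μ ℓ
  have hblock : S.submatrix Fin.succ Fin.succ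
      = -(diagonal d + replicateCol (Fin 1) u * replicateRow (Fin 1) v) := by
    ext i j
    induction i using Fin.cases <;> induction j using Fin.cases <;>
      simp [hS, d, u, v, hΥ, diagonal_apply, mul_apply] <;> ring
  have hd : StrictMono d := Fin.strictMono_cons.2 ⟨fun ℓ => pow_pos (hθ ℓ) 2,
    fun a b hab => pow_lt_pow_left₀ (hmono hab) (hθ a).le two_ne_zero⟩
  have hγ_pos : ∀ ℓ, 0 < γ ℓ := fun ℓ => by
    have := Real.sin_pos_of_pos_of_lt_pi (mul_pos Real.pi_pos hα0)
      (mul_lt_of_lt_one_right Real.pi_pos hα1)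
    have := Real.rpow_pos_of_pos (hθ ℓ) (1 - 2 * α)
    rw [hγ]
    positivity
  have hΓ : 0 < Real.Gamma (1 + α) := Real.Gamma_pos_of_pos (by linarith)
  have huv : ∀ i, 0 < u i * v i := Fin.cases (mul_pos (one_div_pos.2 hJ) (one_div_pos.2 hη))
    fun ℓ => mul_pos (hγ_pos ℓ) (mul_pos (mul_pos hA hΓ) (hμ ℓ))
  obtain ⟨lam, hroot, hlt, hgt, hmult, hcard, hnodup, hneg⟩ :=
    exists_interlacing_charpoly_roots (fun j => by simp [hS]) hblock hd le_rfl huv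
  refine ⟨hmult, ⟨lam, hroot, ?_, fun m hm => ⟨hgt m, ?_⟩, hgt ⟨0, by omega⟩, ?_⟩,
    hcard, hnodup, hneg⟩
  · rw [show (⟨L, _⟩ : Fin (L + 1)) = (⟨L - 1, by omega⟩ : Fin L).succ from
      Fin.ext (Nat.sub_add_cancel hL).symm]
    exact hlt _
  · rw [show (⟨m, _⟩ : Fin (L + 1)) = (⟨m - 1, by omega⟩ : Fin L).succ from
      Fin.ext (Nat.sub_add_cancel hm).symm]
    exact hlt _
  · exact (hlt 0).trans_eq neg_zero
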